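/- Openness of the subdifferential image: if u : B₁(0) → ℝ satisfies that u(x) + ((cot α - δ)/2)‖x‖² is convex for some δ > 0 and α ∈ (0, π/2), and ũ(x) = sin(α)·u(x) + (cos(α)/2)‖x‖², then the set Ω̄ = ∂ũ(B₁(0)) = ⋃_{x ∈ B₁(0)} ∂ũ(x) is open in ℝ^n. -/

import Mathlib

open scoped RealInnerProductSpace

def SubDiffOn {n : ℕ} (S : Set (EuclideanSpace ℝ (Fin n)))
    (f : EuclideanSpace ℝ (Fin n) → ℝ) (a : EuclideanSpace ℝ (Fin n)) :
    Set (EuclideanSpace ℝ (Fin n)) :=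
  {y | ∀ x ∈ S, f a + (inner ℝ y (x - a) : ℝ) ≤ f x}

/-!
Since `ũ - (δ sin α / 2)‖x‖² = sin α · (u + ((cot α - δ)/2)‖x‖²)` is convex, `ũ` is
`δ sin α`-strongly convex on the ball. For a strongly convex `f` on an open set, if `y ∈ ∂f(x₀)`
then the growth `f x ≥ f x₀ + ⟪y, x - x₀⟫ + (m/4)‖x - x₀‖²` forces, for every `y'` close to `y`,
the minimiser of `f - ⟪y', ·⟫` over a small closed ball around `x₀` to lie in the open ball.
That minimiser is then a local, hence (by convexity) a global, minimiser, i.e. `y' ∈ ∂f(x')`.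
-/

lemma strongConvexOn_smul_add_sq {E : Type*} [NormedAddCommGroup E] [InnerProductSpace ℝ E]
    {s : Set E} {u : E → ℝ} {a b c : ℝ} (ha : 0 ≤ a)
    (hu : ConvexOn ℝ s fun x => u x + c / 2 * ‖x‖ ^ 2) :
    StrongConvexOn s (b - a * c) fun x => a * u x + b / 2 * ‖x‖ ^ 2 := by
  rw [strongConvexOn_iff_convex]
  refine (hu.smul ha).congr fun x _ => ?_
  simp only [smul_eq_mul]
  ring

section SubDiffOn

variable {n : ℕ} {s : Set (EuclideanSpace ℝ (Fin n))} {f : EuclideanSpace ℝ (Fin n) → ℝ}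
  {m : ℝ} {a x y y' : EuclideanSpace ℝ (Fin n)}

lemma mem_subDiffOn_of_isLocalMinOn (hf : ConvexOn ℝ s f) (ha : a ∈ s)
    (hmin : IsLocalMinOn (fun x => f x - ⟪y, x⟫) s a) : y ∈ SubDiffOn s f a := by
  have hg : ConvexOn ℝ s fun x => f x - ⟪y, x⟫ := hf.sub ((innerₛₗ ℝ y).concaveOn hf.1)
  intro x hx
  have hax : f a - ⟪y, a⟫ ≤ f x - ⟪y, x⟫ := IsMinOn.of_isLocalMinOn_of_convexOn ha hmin hg hx
  rw [inner_sub_right]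
  linarith

lemma StrongConvexOn.add_sq_le_of_mem_subDiffOn (hf : StrongConvexOn s m f) (ha : a ∈ s)
    (hy : y ∈ SubDiffOn s f a) (hx : x ∈ s) :
    f a + ⟪y, x - a⟫ + m / 4 * ‖x - a‖ ^ 2 ≤ f x := by
  set mid := (1 / 2 : ℝ) • a + (1 / 2 : ℝ) • x
  have hmid : f mid ≤ f a / 2 + f x / 2 - m / 8 * ‖a - x‖ ^ 2 := by
    have := hf.2 ha hx (by norm_num : (0 : ℝ) ≤ 1 / 2) (by norm_num : (0 : ℝ) ≤ 1 / 2)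
      (by norm_num)
    simp only [smul_eq_mul] at this
    linarith
  have hsub : f a + ⟪y, mid - a⟫ ≤ f mid :=
    hy mid (hf.1 ha hx (by norm_num) (by norm_num) (by norm_num))
  have hmid_sub : mid - a = (1 / 2 : ℝ) • (x - a) := by module
  rw [hmid_sub, real_inner_smul_right] at hsub
  rw [norm_sub_rev] at hmid
  linarith

lemma StrongConvexOn.norm_sub_lt_of_mem_subDiffOn (hf : StrongConvexOn s m f) (hm : 0 < m)
    {x₀ : EuclideanSpace ℝ (Fin n)} {r : ℝ} (hx₀ : x₀ ∈ s) (hy : y ∈ SubDiffOn s f x₀)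
    (hx : x ∈ s) (hmin : f x - ⟪y', x⟫ ≤ f x₀ - ⟪y', x₀⟫) (hy' : ‖y' - y‖ < m * r / 4) :
    ‖x - x₀‖ < r := by
  have hgrowth := hf.add_sq_le_of_mem_subDiffOn hx₀ hy hx
  have hquad : m / 4 * ‖x - x₀‖ ^ 2 ≤ ‖y' - y‖ * ‖x - x₀‖ :=
    calc m / 4 * ‖x - x₀‖ ^ 2 ≤ ⟪y' - y, x - x₀⟫ := by
          rw [inner_sub_left, inner_sub_right y' x x₀]
          linarith
      _ ≤ ‖y' - y‖ * ‖x - x₀‖ := real_inner_le_norm _ _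
  have hr : 0 < r := by nlinarith [norm_nonneg (y' - y)]
  by_contra! hrd
  have hd : 0 < ‖x - x₀‖ := hr.trans_le hrd
  nlinarith [mul_lt_mul_of_pos_right hy' hd,
    mul_le_mul_of_nonneg_left hrd (by positivity : 0 ≤ m / 4 * ‖x - x₀‖)]

theorem StrongConvexOn.isOpen_iUnion_subDiffOn (hs : IsOpen s) (hm : 0 < m)
    (hf : StrongConvexOn s m f) : IsOpen (⋃ x ∈ s, SubDiffOn s f x) := by
  have hconv : ConvexOn ℝ s f := hf.convexOn fun r => by positivity
  rw [Metric.isOpen_iff]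
  intro y hy
  obtain ⟨x₀, hx₀, hy⟩ := Set.mem_iUnion₂.1 hy
  obtain ⟨r, hr, hK⟩ := Metric.nhds_basis_closedBall.mem_iff.1 (hs.mem_nhds hx₀)
  refine ⟨m * r / 4, by positivity, fun y' hy' => ?_⟩
  have hgcont : ContinuousOn (fun x => f x - ⟪y', x⟫) (Metric.closedBall x₀ r) :=
    ((hconv.continuousOn hs).mono hK).sub (continuous_const.inner continuous_id).continuousOn
  obtain ⟨x, hxK, hxmin⟩ := (isCompact_closedBall x₀ r).exists_isMinOn
    ⟨x₀, Metric.mem_closedBall_self hr.le⟩ hgcont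
  have hxr : ‖x - x₀‖ < r :=
    hf.norm_sub_lt_of_mem_subDiffOn hm hx₀ hy (hK hxK)
      (hxmin (Metric.mem_closedBall_self hr.le)) (by rwa [Metric.mem_ball, dist_eq_norm] at hy')
  have hKnhds : Metric.closedBall x₀ r ∈ nhds x :=
    Filter.mem_of_superset (Metric.isOpen_ball.mem_nhds (by rwa [Metric.mem_ball, dist_eq_norm]))
      Metric.ball_subset_closedBall
  exact Set.mem_iUnion₂.2
    ⟨x, hK hxK, mem_subDiffOn_of_isLocalMinOn hconv (hK hxK) ((hxmin.isLocalMin hKnhds).on s)⟩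

end SubDiffOn

theorem subdiff_image_open {n : ℕ} (α δ : ℝ) (hα : α ∈ Set.Ioo 0 (Real.pi / 2))
    (hδ : 0 < δ) (u : EuclideanSpace ℝ (Fin n) → ℝ)
    (hconv : ConvexOn ℝ (Metric.ball 0 1)
      (fun x => u x + (Real.cos α / Real.sin α - δ) / 2 * ‖x‖ ^ 2)) :
    IsOpen (⋃ x ∈ Metric.ball (0 : EuclideanSpace ℝ (Fin n)) 1,
      SubDiffOn (Metric.ball 0 1)
        (fun z => Real.sin α * u z + Real.cos α / 2 * ‖z‖ ^ 2) x) := by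
  have hsin : 0 < Real.sin α :=
    Real.sin_pos_of_pos_of_lt_pi hα.1 (hα.2.trans (by linarith [Real.pi_pos]))
  have hstrong := strongConvexOn_smul_add_sq (b := Real.cos α) hsin.le hconv
  have hmodulus : Real.cos α - Real.sin α * (Real.cos α / Real.sin α - δ) = δ * Real.sin α := by
    field_simp
    ring
  rw [hmodulus] at hstrong
  exact hstrong.isOpen_iUnion_subDiffOn Metric.isOpen_ball (mul_pos hδ hsin)
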